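/- With the Matérn spectral density and the microergodic constraint σ²α^{2ν} = σ₀²α₀^{2ν} and ν + d/2 ≥ 1, for all ω ∈ ℝ^d: |f_{σ,α}(ω)/f_{σ₀,α₀}(ω) − 1| ≤ (2ν+d)·max(α₀², α²)·max(α₀^{2ν+d−2}, α^{2ν+d−2}) / (α^{2ν+d−2}(α² + ‖ω‖²)). -/

import Mathlib

/-!
The ratio of the two densities is `x ^ s` with `x = (α₀² + ‖ω‖²) / (α² + ‖ω‖²)` and
`s = ν + d/2 ≥ 1`, because the microergodic constraint makes the prefactors agree. By the mean
value theorem `|x ^ s - 1| ≤ s · max x 1 ^ (s - 1) · |x - 1|`, where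
`|x - 1| = |α₀² - α²| / (α² + ‖ω‖²)` and `max x 1 ≤ max α₀² α² / α²` uniformly in `ω`.
-/

open Real

noncomputable def maternSpectralDensity (ν : ℝ) (d : ℕ) (σ α : ℝ)
    (ω : EuclideanSpace ℝ (Fin d)) : ℝ :=
  Real.Gamma (ν + (d : ℝ) / 2) / Real.Gamma ν * (σ ^ 2 * α ^ (2 * ν)) /
    (Real.pi ^ ((d : ℝ) / 2) * (α ^ 2 + ‖ω‖ ^ 2) ^ (ν + (d : ℝ) / 2))

theorem maternSpectralDensity_div_eq {ν : ℝ} {d : ℕ} (hν : 0 < ν) {σ σ₀ α α₀ : ℝ}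
    (hσ₀ : σ₀ ≠ 0) (hα₀ : 0 < α₀)
    (hmicro : σ ^ 2 * α ^ (2 * ν) = σ₀ ^ 2 * α₀ ^ (2 * ν)) (ω : EuclideanSpace ℝ (Fin d)) :
    maternSpectralDensity ν d σ α ω / maternSpectralDensity ν d σ₀ α₀ ω =
      ((α₀ ^ 2 + ‖ω‖ ^ 2) / (α ^ 2 + ‖ω‖ ^ 2)) ^ (ν + (d : ℝ) / 2) := by
  have hΓ : Real.Gamma (ν + (d : ℝ) / 2) ≠ 0 := (Real.Gamma_pos_of_pos (by positivity)).ne'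
  have hΓν : Real.Gamma ν ≠ 0 := (Real.Gamma_pos_of_pos hν).ne'
  have hα₀ν : α₀ ^ (2 * ν) ≠ 0 := (rpow_pos_of_pos hα₀ _).ne'
  unfold maternSpectralDensity
  rw [hmicro, div_rpow (by positivity) (by positivity)]
  field_simp

theorem abs_rpow_sub_rpow_le {s a b : ℝ} (hs : 1 ≤ s) (ha : 0 ≤ a) (hb : 0 ≤ b) :
    |a ^ s - b ^ s| ≤ s * max a b ^ (s - 1) * |a - b| := by
  have bound : ∀ x ∈ Set.uIcc b a, ‖s * x ^ (s - 1)‖ ≤ s * max a b ^ (s - 1) := by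
    intro x hx
    have hx₀ : 0 ≤ x := (le_min hb ha).trans hx.1
    rw [norm_eq_abs, abs_of_nonneg (by positivity), max_comm]
    gcongr
    exact hx.2
  simpa only [norm_eq_abs] using
    (convex_uIcc b a).norm_image_sub_le_of_norm_hasDerivWithin_le (f := fun x => x ^ s)
      (fun x _ => (hasDerivAt_rpow_const (Or.inr hs)).hasDerivWithinAt) bound
      Set.left_mem_uIcc Set.right_mem_uIcc

theorem abs_div_rpow_sub_one_le {s a a₀ t : ℝ} (hs : 1 ≤ s) (ha : 0 < a) (ha₀ : 0 ≤ a₀)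
    (ht : 0 ≤ t) :
    |((a₀ + t) / (a + t)) ^ s - 1| ≤
      s * max a₀ a * max (a₀ ^ (s - 1)) (a ^ (s - 1)) / (a ^ (s - 1) * (a + t)) := by
  set x := (a₀ + t) / (a + t)
  have hat : 0 < a + t := by positivity
  have hmax_le : max x 1 ≤ max a₀ a / a := by
    refine max_le ?_ ((one_le_div ha).mpr (le_max_right _ _))
    rw [div_le_div_iff₀ hat ha]
    nlinarith [le_max_left a₀ a, le_max_right a₀ a]
  have hsub_le : |x - 1| ≤ max a₀ a / (a + t) := by
    rw [div_sub_one hat.ne', abs_div, abs_of_pos hat, add_sub_add_right_eq_sub]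
    gcongr
    exact abs_sub_le_of_nonneg_of_le ha₀ (le_max_left _ _) ha.le (le_max_right _ _)
  calc |x ^ s - 1| = |x ^ s - 1 ^ s| := by rw [one_rpow]
    _ ≤ s * max x 1 ^ (s - 1) * |x - 1| := abs_rpow_sub_rpow_le hs (by positivity) zero_le_one
    _ ≤ s * (max a₀ a / a) ^ (s - 1) * (max a₀ a / (a + t)) := by
        gcongr
    _ = s * max a₀ a * max (a₀ ^ (s - 1)) (a ^ (s - 1)) / (a ^ (s - 1) * (a + t)) := by
        rw [div_rpow (by positivity) ha.le, rpow_max ha₀ ha.le (by linarith)]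
        field_simp

theorem stmt6_general (ν : ℝ) (d : ℕ) (hν : 0 < ν) (hνd : 1 ≤ ν + (d : ℝ) / 2)
    (σ σ₀ α α₀ : ℝ) (hσ₀ : 0 < σ₀) (hα : 0 < α) (hα₀ : 0 < α₀)
    (hmicro : σ ^ 2 * α ^ (2 * ν) = σ₀ ^ 2 * α₀ ^ (2 * ν))
    (ω : EuclideanSpace ℝ (Fin d)) :
    |(Real.Gamma (ν + (d : ℝ) / 2) / Real.Gamma ν * (σ ^ 2 * α ^ (2 * ν)) /
          (Real.pi ^ ((d : ℝ) / 2) * (α ^ 2 + ‖ω‖ ^ 2) ^ (ν + (d : ℝ) / 2))) /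
        (Real.Gamma (ν + (d : ℝ) / 2) / Real.Gamma ν * (σ₀ ^ 2 * α₀ ^ (2 * ν)) /
          (Real.pi ^ ((d : ℝ) / 2) * (α₀ ^ 2 + ‖ω‖ ^ 2) ^ (ν + (d : ℝ) / 2))) - 1|
      ≤ (2 * ν + (d : ℝ)) * max (α₀ ^ 2) (α ^ 2) *
          max (α₀ ^ (2 * ν + (d : ℝ) - 2)) (α ^ (2 * ν + (d : ℝ) - 2)) /
        (α ^ (2 * ν + (d : ℝ) - 2) * (α ^ 2 + ‖ω‖ ^ 2)) := by
  have sq_rpow : ∀ β : ℝ, 0 < β → (β ^ 2) ^ (ν + (d : ℝ) / 2 - 1) = β ^ (2 * ν + (d : ℝ) - 2) :=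
    fun β hβ => by rw [← rpow_natCast, ← rpow_mul hβ.le]; push_cast; ring_nf
  change |maternSpectralDensity ν d σ α ω / maternSpectralDensity ν d σ₀ α₀ ω - 1| ≤ _
  rw [maternSpectralDensity_div_eq hν hσ₀.ne' hα₀ hmicro]
  calc _ ≤ _ := abs_div_rpow_sub_one_le hνd (by positivity) (by positivity) (by positivity)
    _ ≤ _ := by
        rw [sq_rpow α hα, sq_rpow α₀ hα₀]
        gcongr ?_ * _ * _ / _
        linarith [Nat.cast_nonneg (α := ℝ) d]

/-- With the Matérn spectral density and the microergodic constraint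
`σ²α^{2ν} = σ₀²α₀^{2ν}` and `ν + d/2 ≥ 1`, for all `ω ∈ ℝ^d`:
`|f_{σ,α}(ω)/f_{σ₀,α₀}(ω) − 1|
  ≤ (2ν+d)·max(α₀²,α²)·max(α₀^{2ν+d−2},α^{2ν+d−2}) / (α^{2ν+d−2}(α²+‖ω‖²))`. -/
theorem stmt6 (ν : ℝ) (d : ℕ) (hν : 0 < ν) (hd : 1 ≤ d) (hνd : 1 ≤ ν + (d : ℝ) / 2)
    (σ σ₀ α α₀ : ℝ) (hσ : 0 < σ) (hσ₀ : 0 < σ₀) (hα : 0 < α) (hα₀ : 0 < α₀)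
    (hmicro : σ ^ 2 * α ^ (2 * ν) = σ₀ ^ 2 * α₀ ^ (2 * ν))
    (ω : EuclideanSpace ℝ (Fin d)) :
    |(Real.Gamma (ν + (d : ℝ) / 2) / Real.Gamma ν * (σ ^ 2 * α ^ (2 * ν)) /
          (Real.pi ^ ((d : ℝ) / 2) * (α ^ 2 + ‖ω‖ ^ 2) ^ (ν + (d : ℝ) / 2))) /
        (Real.Gamma (ν + (d : ℝ) / 2) / Real.Gamma ν * (σ₀ ^ 2 * α₀ ^ (2 * ν)) /
          (Real.pi ^ ((d : ℝ) / 2) * (α₀ ^ 2 + ‖ω‖ ^ 2) ^ (ν + (d : ℝ) / 2))) - 1|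
      ≤ (2 * ν + (d : ℝ)) * max (α₀ ^ 2) (α ^ 2) *
          max (α₀ ^ (2 * ν + (d : ℝ) - 2)) (α ^ (2 * ν + (d : ℝ) - 2)) /
        (α ^ (2 * ν + (d : ℝ) - 2) * (α ^ 2 + ‖ω‖ ^ 2)) :=
  stmt6_general ν d hν hνd σ σ₀ α α₀ hσ₀ hα hα₀ hmicro ω
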